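/- arXiv:2502.14484 — 5 statements merged into one kernel-verified Lean document; each statement's English description precedes it below -/
import Mathlib

section
/- Let F₀(t) = (1−t)·D₀ + t·D₁ for t ∈ ℝ (a variable point on the line L₀), and let N₀(t) be the line through F₀(t) and R(F₀(t)). Then N₀(t) has nonempty intersection with the circle 𝒞 if and only if F₀(t) is one of the two points L₀ ∩ L₋₃ or L₀ ∩ L₃; moreover, for these two positions the line N₀(t) is tangent to 𝒞, i.e., it meets 𝒞 in exactly one point. -/
/- STATEMENT 0: With D_i the vertices of a regular 9-gon (rotated by 17π/18), L_i the line
through D_i and D_{i+1}, R the rotation by 8π/9 about the origin O, 𝒞 the circle through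
D₋₁, D₋₃ and O, and F₀(t) = (1-t)·D₀ + t·D₁, N₀(t) the line through F₀(t) and R(F₀(t)):
N₀(t) meets 𝒞 iff F₀(t) is one of the two points L₀ ∩ L₋₃ or L₀ ∩ L₃, and in those
positions N₀(t) is tangent to 𝒞 (meets it in exactly one point). -/

open Real

noncomputable section

abbrev Pt := EuclideanSpace ℝ (Fin 2)

/-- The point of ℝ² with coordinates `(x, y)`. -/
def pt (x y : ℝ) : Pt := (WithLp.equiv 2 _).symm ![x, y]

/-- The affine line through two points `A` and `B`. -/
def lineThrough (A B : Pt) : Set Pt := {P | ∃ t : ℝ, P = A + t • (B - A)}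

/-- Counterclockwise rotation by angle `θ` about the point `c`. -/
def rotAbout (θ : ℝ) (c p : Pt) : Pt :=
  pt (c 0 + Real.cos θ * (p 0 - c 0) - Real.sin θ * (p 1 - c 1))
     (c 1 + Real.sin θ * (p 0 - c 0) + Real.cos θ * (p 1 - c 1))

/-- The origin. -/
def O : Pt := pt 0 0

/-- Vertices of the regular 9-gon: `D i = (cos(2πi/9 + 17π/18), sin(2πi/9 + 17π/18))`. -/
def D (i : ℤ) : Pt :=
  pt (Real.cos (2 * π * i / 9 + 17 * π / 18)) (Real.sin (2 * π * i / 9 + 17 * π / 18))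

/-- The line `L i` through `D i` and `D (i+1)`. -/
def L (i : ℤ) : Set Pt := lineThrough (D i) (D (i + 1))

/-- The variable point `F₀(t) = (1-t)·D₀ + t·D₁` on the line `L₀`. -/
def F₀ (t : ℝ) : Pt := (1 - t) • D 0 + t • D 1

/-- The line `N₀(t)` through `F₀(t)` and its rotate by 8π/9 about the origin. -/
def N₀ (t : ℝ) : Set Pt := lineThrough (F₀ t) (rotAbout (8 * π / 9) O (F₀ t))

/-
Let `h = cos (π/9)` be the inradius of the 9-gon and `φ = 4π/9`, so that `R` is the rotation by
`2φ`. The line through `P` and `R P` is `{X | ⟪X, R_φ P⟫ = cos φ ‖P‖²}`, and the centre of `𝒞` is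
`Z = (0, b)` with `b = 1 / (2 cos (2π/9)) = 4 h cos φ` (because `cos 20° cos 40° cos 80° = 1/8`).
For `P` on `L₀` the component `⟪Z, R_φ P⟫ = -b h` does not depend on `P`, and the discriminant of
the line–circle equation collapses to `-(4 sin φ cos φ (‖P‖² - 4h²))² ≤ 0`. So the line meets `𝒞`
only when `‖P‖ = 2h`, and then it is tangent. The points of `L₀` at distance `2h` from `O` are
where `L₀` meets the two sides `L_{±3}`, whose normals make angles `±2π/3` with that of `L₀`.
-/

open scoped RealInnerProductSpace

section LineSphere

variable {E : Type*} [NormedAddCommGroup E] [InnerProductSpace ℝ E] {P v Z : E} {r : ℝ}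

lemma norm_add_smul_sub_sq (u : ℝ) :
    ‖P + u • v - Z‖ ^ 2 = ‖v‖ ^ 2 * (u * u) + 2 * ⟪P - Z, v⟫ * u + ‖P - Z‖ ^ 2 := by
  rw [show P + u • v - Z = (P - Z) + u • v by abel, norm_add_sq_real, norm_smul, inner_smul_right,
    mul_pow, Real.norm_eq_abs, sq_abs]
  ring

lemma add_smul_mem_sphere_iff (hr : 0 ≤ r) (u : ℝ) :
    P + u • v ∈ Metric.sphere Z r ↔
      ‖v‖ ^ 2 * (u * u) + 2 * ⟪P - Z, v⟫ * u + (‖P - Z‖ ^ 2 - r ^ 2) = 0 := by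
  rw [mem_sphere_iff_norm, ← sq_eq_sq₀ (norm_nonneg _) hr, norm_add_smul_sub_sq]
  constructor <;> intro h <;> linarith

lemma discrim_nonneg_of_mem_line_inter_sphere {X : E}
    (hX : X ∈ {X | ∃ u : ℝ, X = P + u • v} ∩ Metric.sphere Z r) :
    0 ≤ discrim (‖v‖ ^ 2) (2 * ⟪P - Z, v⟫) (‖P - Z‖ ^ 2 - r ^ 2) := by
  obtain ⟨⟨u, rfl⟩, hu⟩ := hX
  have hquad := norm_add_smul_sub_sq (Z := Z) (P := P) (v := v) u
  rw [mem_sphere_iff_norm.1 hu] at hquad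
  rw [discrim_eq_sq_of_quadratic_eq_zero (x := u) (by linear_combination -hquad)]
  positivity

lemma existsUnique_mem_line_inter_sphere (hv : v ≠ 0) (hr : 0 ≤ r)
    (hd : discrim (‖v‖ ^ 2) (2 * ⟪P - Z, v⟫) (‖P - Z‖ ^ 2 - r ^ 2) = 0) :
    ∃! X, X ∈ {X | ∃ u : ℝ, X = P + u • v} ∩ Metric.sphere Z r := by
  obtain ⟨u, hu, huniq⟩ := (discrim_eq_zero_iff (by positivity)).1 hd
  refine ⟨P + u • v, ⟨⟨u, rfl⟩, (add_smul_mem_sphere_iff hr u).2 hu⟩, ?_⟩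
  rintro _ ⟨⟨u', rfl⟩, hu'⟩
  rw [huniq u' ((add_smul_mem_sphere_iff hr u').1 hu')]

lemma norm_sq_eq_two_inner_of_mem_sphere {X : E} (h0 : (0 : E) ∈ Metric.sphere Z r)
    (hX : X ∈ Metric.sphere Z r) : ‖X‖ ^ 2 = 2 * ⟪X, Z⟫ := by
  rw [mem_sphere_iff_norm, zero_sub, norm_neg] at h0
  have h := norm_sub_sq_real X Z
  rw [mem_sphere_iff_norm.1 hX, h0] at h
  linarith

end LineSphere

@[simp] lemma pt_apply_zero (x y : ℝ) : pt x y 0 = x := rfl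

@[simp] lemma pt_apply_one (x y : ℝ) : pt x y 1 = y := rfl

lemma Pt.ext_coords {X Y : Pt} (h0 : X 0 = Y 0) (h1 : X 1 = Y 1) : X = Y := by
  ext i; fin_cases i <;> assumption

lemma Pt.inner_eq (X Y : Pt) : ⟪X, Y⟫ = X 0 * Y 0 + X 1 * Y 1 := by
  simp [PiLp.inner_apply, Fin.sum_univ_two, mul_comm]

lemma Pt.norm_sq_eq (X : Pt) : ‖X‖ ^ 2 = X 0 ^ 2 + X 1 ^ 2 := by
  simp [EuclideanSpace.real_norm_sq_eq, Fin.sum_univ_two]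

lemma O_eq_zero : O = 0 := by
  ext i; fin_cases i <;> rfl

def cross (X Y : Pt) : ℝ := X 0 * Y 1 - X 1 * Y 0

lemma inner_sq_add_cross_sq (X Y : Pt) : ⟪X, Y⟫ ^ 2 + cross X Y ^ 2 = ‖X‖ ^ 2 * ‖Y‖ ^ 2 := by
  rw [Pt.inner_eq, Pt.norm_sq_eq, Pt.norm_sq_eq, cross]
  ring

lemma discrim_line_sphere (P v Z : Pt) (r : ℝ) :
    discrim (‖v‖ ^ 2) (2 * ⟪P - Z, v⟫) (‖P - Z‖ ^ 2 - r ^ 2)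
      = 4 * (r ^ 2 * ‖v‖ ^ 2 - cross (P - Z) v ^ 2) := by
  rw [discrim]
  linear_combination 4 * inner_sq_add_cross_sq (P - Z) v

lemma eq_smul_of_cross_eq_zero {w v : Pt} (hv : v ≠ 0) (h : cross w v = 0) :
    w = (⟪w, v⟫ / ‖v‖ ^ 2) • v := by
  have hv2 : v 0 ^ 2 + v 1 ^ 2 ≠ 0 := by rw [← Pt.norm_sq_eq]; simpa using hv
  rw [cross] at h
  rw [Pt.inner_eq, Pt.norm_sq_eq]
  refine Pt.ext_coords ?_ ?_ <;> simp only [PiLp.smul_apply, smul_eq_mul] <;> field_simp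
  · linear_combination v 1 * h
  · linear_combination -v 0 * h

lemma mem_lineThrough_iff_cross {A B X : Pt} (hAB : A ≠ B) :
    X ∈ lineThrough A B ↔ cross (X - A) (B - A) = 0 := by
  constructor
  · rintro ⟨u, rfl⟩
    simp only [cross, add_sub_cancel_left, PiLp.smul_apply, smul_eq_mul]
    ring
  · intro h
    exact ⟨_, eq_add_of_sub_eq' (eq_smul_of_cross_eq_zero (sub_ne_zero.2 hAB.symm) h)⟩

def unitVec (α : ℝ) : Pt := pt (cos α) (sin α)

lemma inner_unitVec (X : Pt) (α : ℝ) : ⟪X, unitVec α⟫ = X 0 * cos α + X 1 * sin α :=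
  Pt.inner_eq _ _

@[simp] lemma norm_unitVec (α : ℝ) : ‖unitVec α‖ = 1 := by
  rw [← pow_eq_one_iff_of_nonneg (norm_nonneg _) two_ne_zero, Pt.norm_sq_eq]
  simp [unitVec]

lemma cross_sub_unitVec (X : Pt) (μ δ : ℝ) :
    cross (X - unitVec (μ - δ)) (unitVec (μ + δ) - unitVec (μ - δ))
      = 2 * sin δ * (⟪X, unitVec μ⟫ - cos δ) := by
  rw [inner_unitVec]
  simp only [cross, unitVec, PiLp.sub_apply, pt_apply_zero, pt_apply_one,
    cos_add, cos_sub, sin_add, sin_sub]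
  linear_combination -2 * sin δ * cos δ * sin_sq_add_cos_sq μ

lemma unitVec_sub_ne_add {μ δ : ℝ} (hδ : sin δ ≠ 0) : unitVec (μ - δ) ≠ unitVec (μ + δ) := by
  intro h
  have h0 := cross_sub_unitVec (unitVec μ) μ δ
  rw [h, sub_self, inner_unitVec] at h0
  simp only [cross, unitVec, PiLp.zero_apply, mul_zero, sub_zero, pt_apply_zero,
    pt_apply_one] at h0
  have hcos : cos δ = 1 := by
    have := (mul_eq_zero.1 h0.symm).resolve_left (by simpa using hδ)
    linarith [cos_sq_add_sin_sq μ]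
  exact hδ (by nlinarith [sin_sq_add_cos_sq δ])

lemma mem_lineThrough_unitVec_iff {μ δ : ℝ} (hδ : sin δ ≠ 0) (X : Pt) :
    X ∈ lineThrough (unitVec (μ - δ)) (unitVec (μ + δ)) ↔ ⟪X, unitVec μ⟫ = cos δ := by
  rw [mem_lineThrough_iff_cross (unitVec_sub_ne_add hδ), cross_sub_unitVec,
    mul_eq_zero, sub_eq_zero, or_iff_right (by simpa using hδ)]

lemma inner_unitVec_add (X : Pt) (μ β : ℝ) :
    ⟪X, unitVec (μ + β)⟫ = cos β * ⟪X, unitVec μ⟫ + sin β * ⟪X, unitVec (μ + π / 2)⟫ := by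
  simp only [inner_unitVec, cos_add, sin_add, cos_pi_div_two, sin_pi_div_two]
  ring

lemma norm_sq_eq_inner_unitVec_sq (X : Pt) (μ : ℝ) :
    ‖X‖ ^ 2 = ⟪X, unitVec μ⟫ ^ 2 + ⟪X, unitVec (μ + π / 2)⟫ ^ 2 := by
  simp only [Pt.norm_sq_eq, inner_unitVec, cos_add, sin_add, cos_pi_div_two, sin_pi_div_two]
  linear_combination -(X 0 ^ 2 + X 1 ^ 2) * sin_sq_add_cos_sq μ

lemma norm_sq_eq_four_mul_sq_iff {X : Pt} {μ a : ℝ} (h : ⟪X, unitVec μ⟫ = a) :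
    ‖X‖ ^ 2 = 4 * a ^ 2 ↔
      ⟪X, unitVec (μ - 2 * π / 3)⟫ = a ∨ ⟪X, unitVec (μ + 2 * π / 3)⟫ = a := by
  have hcos : cos (2 * π / 3) = -1 / 2 := by
    rw [show 2 * π / 3 = π - π / 3 by ring, cos_pi_sub, cos_pi_div_three]
    norm_num
  have hsin : sin (2 * π / 3) = √3 / 2 := by
    rw [show 2 * π / 3 = π - π / 3 by ring, sin_pi_sub, sin_pi_div_three]
  have hfactor : (⟪X, unitVec (μ - 2 * π / 3)⟫ - a) * (⟪X, unitVec (μ + 2 * π / 3)⟫ - a)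
      = -3 / 4 * (‖X‖ ^ 2 - 4 * a ^ 2) := by
    rw [sub_eq_add_neg μ, inner_unitVec_add X μ (-(2 * π / 3)), inner_unitVec_add X μ (2 * π / 3),
      cos_neg, sin_neg, hcos, hsin, h, norm_sq_eq_inner_unitVec_sq X μ, h]
    linear_combination (-⟪X, unitVec (μ + π / 2)⟫ ^ 2 / 4) * Real.sq_sqrt (zero_le_three (α := ℝ))
  rw [← sub_eq_zero, ← sub_eq_zero (a := ⟪X, _⟫), ← sub_eq_zero (a := ⟪X, _⟫), ← mul_eq_zero,
    hfactor]
  simp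

lemma norm_rotAbout_sub_sq (φ : ℝ) (P : Pt) :
    ‖rotAbout (2 * φ) O P - P‖ ^ 2 = (2 * sin φ) ^ 2 * ‖P‖ ^ 2 := by
  simp only [Pt.norm_sq_eq, rotAbout, O, PiLp.sub_apply, pt_apply_zero, pt_apply_one, sub_zero,
    zero_add, cos_two_mul_eq_one_sub, sin_two_mul]
  linear_combination 4 * sin φ ^ 2 * (P 0 ^ 2 + P 1 ^ 2) * sin_sq_add_cos_sq φ

lemma cross_sub_rotAbout (φ : ℝ) (P Z : Pt) :
    cross (P - Z) (rotAbout (2 * φ) O P - P)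
      = 2 * sin φ * (cos φ * ‖P‖ ^ 2 - ⟪Z, rotAbout φ O P⟫) := by
  rw [Pt.norm_sq_eq, Pt.inner_eq]
  simp only [cross, rotAbout, O, PiLp.sub_apply, pt_apply_zero, pt_apply_one, sub_zero,
    zero_add, cos_two_mul_eq_one_sub, sin_two_mul]
  ring

lemma cos_pi_div_nine_pos : 0 < cos (π / 9) :=
  cos_pos_of_mem_Ioo ⟨by linarith [pi_pos], by linarith [pi_pos]⟩

lemma cos_four_pi_div_nine_pos : 0 < cos (4 * π / 9) :=
  cos_pos_of_mem_Ioo ⟨by linarith [pi_pos], by linarith [pi_pos]⟩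

lemma sin_four_pi_div_nine_pos : 0 < sin (4 * π / 9) :=
  sin_pos_of_pos_of_lt_pi (by positivity) (by linarith [pi_pos])

lemma eight_mul_cos_pi_div_nine_mul_cos_mul_cos :
    8 * cos (π / 9) * cos (2 * π / 9) * cos (4 * π / 9) = 1 := by
  have hsin : 0 < sin (π / 9) := sin_pos_of_pos_of_lt_pi (by positivity) (by linarith [pi_pos])
  have h8 : sin (8 * π / 9) = 8 * sin (π / 9) * cos (π / 9) * cos (2 * π / 9) * cos (4 * π / 9) := by
    rw [show 8 * π / 9 = 2 * (4 * π / 9) by ring, sin_two_mul,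
      show 4 * π / 9 = 2 * (2 * π / 9) by ring, sin_two_mul, show 2 * π / 9 = 2 * (π / 9) by ring,
      sin_two_mul]
    ring
  rw [show 8 * π / 9 = π - π / 9 by ring, sin_pi_sub] at h8
  apply mul_left_cancel₀ hsin.ne'
  linear_combination -h8

lemma D_eq_unitVec (i : ℤ) : D i = unitVec (2 * π * i / 9 + 17 * π / 18) := rfl

lemma mem_L_iff (j : ℤ) (X : Pt) :
    X ∈ L j ↔ ⟪X, unitVec (2 * π * j / 9 + 19 * π / 18)⟫ = cos (π / 9) := by
  rw [L, D_eq_unitVec, D_eq_unitVec, Int.cast_add, Int.cast_one,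
    show 2 * π * j / 9 + 17 * π / 18 = 2 * π * j / 9 + 19 * π / 18 - π / 9 by ring,
    show 2 * π * (j + 1) / 9 + 17 * π / 18 = 2 * π * j / 9 + 19 * π / 18 + π / 9 by ring,
    mem_lineThrough_unitVec_iff (sin_pos_of_pos_of_lt_pi (by positivity) (by linarith [pi_pos])).ne']

lemma mem_L0_inter_L_neg_three_or_L_three_iff {P : Pt} (hP : P ∈ L 0) :
    (P ∈ L 0 ∩ L (-3) ∨ P ∈ L 0 ∩ L 3) ↔ ‖P‖ ^ 2 = 4 * cos (π / 9) ^ 2 := by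
  have hP' := (mem_L_iff 0 P).1 hP
  rw [Set.mem_inter_iff, Set.mem_inter_iff, and_iff_right hP, and_iff_right hP, mem_L_iff,
    mem_L_iff, norm_sq_eq_four_mul_sq_iff hP']
  push_cast
  ring_nf

def radius𝒞 : ℝ := 4 * cos (π / 9) * cos (4 * π / 9)

lemma radius𝒞_pos : 0 < radius𝒞 := by
  have := cos_pi_div_nine_pos
  have := cos_four_pi_div_nine_pos
  rw [radius𝒞]
  positivity

lemma center_radius_eq_of_mem_sphere {Z : Pt} {r : ℝ} (h1 : D (-1) ∈ Metric.sphere Z r)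
    (h2 : D (-3) ∈ Metric.sphere Z r) (h3 : O ∈ Metric.sphere Z r) :
    Z = pt 0 radius𝒞 ∧ r = radius𝒞 := by
  rw [O_eq_zero] at h3
  have e1 := norm_sq_eq_two_inner_of_mem_sphere h3 h1
  have e3 := norm_sq_eq_two_inner_of_mem_sphere h3 h2
  rw [D_eq_unitVec, norm_unitVec, one_pow, Pt.inner_eq,
    show 2 * π * ((-1 : ℤ) : ℝ) / 9 + 17 * π / 18 = 2 * π / 9 + π / 2 by push_cast; ring] at e1
  rw [D_eq_unitVec, norm_unitVec, one_pow, Pt.inner_eq,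
    show 2 * π * ((-3 : ℤ) : ℝ) / 9 + 17 * π / 18 = -(2 * π / 9) + π / 2 by push_cast; ring] at e3
  simp only [unitVec, pt_apply_zero, pt_apply_one, cos_add_pi_div_two,
    sin_add_pi_div_two, sin_neg, cos_neg] at e1 e3
  have hs : 0 < sin (2 * π / 9) := sin_pos_of_pos_of_lt_pi (by positivity) (by linarith [pi_pos])
  have hZ0 : Z 0 = 0 := by
    have : sin (2 * π / 9) * Z 0 = 0 := by linear_combination (e1 - e3) / 4
    exact (mul_eq_zero.1 this).resolve_left hs.ne'
  have hZ1 : Z 1 = radius𝒞 := by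
    rw [radius𝒞]
    linear_combination (-Z 1) * eight_mul_cos_pi_div_nine_mul_cos_mul_cos
      - 2 * cos (π / 9) * cos (4 * π / 9) * (e1 + e3)
  have hZ : Z = pt 0 radius𝒞 := Pt.ext_coords hZ0 hZ1
  refine ⟨hZ, ?_⟩
  rw [mem_sphere_iff_norm, zero_sub, norm_neg, hZ] at h3
  rw [← h3, ← sq_eq_sq₀ (norm_nonneg _) radius𝒞_pos.le, Pt.norm_sq_eq]
  simp

lemma inner_rotAbout_of_mem_L0 {P : Pt} (hP : P ∈ L 0) (b : ℝ) :
    ⟪pt 0 b, rotAbout (4 * π / 9) O P⟫ = -(b * cos (π / 9)) := by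
  rw [mem_L_iff, inner_unitVec, Int.cast_zero,
    show 2 * π * 0 / 9 + 19 * π / 18 = π / 2 - 4 * π / 9 + π by ring, cos_add_pi, sin_add_pi,
    cos_pi_div_two_sub, sin_pi_div_two_sub] at hP
  rw [Pt.inner_eq, ← hP]
  simp only [rotAbout, O, pt_apply_zero, pt_apply_one, sub_zero, zero_add]
  ring

lemma discrim_eq_of_mem_L0 {P : Pt} (hP : P ∈ L 0) :
    discrim (‖rotAbout (8 * π / 9) O P - P‖ ^ 2)
        (2 * ⟪P - pt 0 radius𝒞, rotAbout (8 * π / 9) O P - P⟫)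
        (‖P - pt 0 radius𝒞‖ ^ 2 - radius𝒞 ^ 2)
      = -(4 * sin (4 * π / 9) * cos (4 * π / 9) * (‖P‖ ^ 2 - 4 * cos (π / 9) ^ 2)) ^ 2 := by
  rw [discrim_line_sphere, show 8 * π / 9 = 2 * (4 * π / 9) by ring, norm_rotAbout_sub_sq,
    cross_sub_rotAbout, inner_rotAbout_of_mem_L0 hP, radius𝒞]
  ring

lemma lineThrough_rotAbout_inter_sphere_of_mem_L0 {P : Pt} (hP : P ∈ L 0) :
    ((lineThrough P (rotAbout (8 * π / 9) O P) ∩ Metric.sphere (pt 0 radius𝒞) radius𝒞).Nonempty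
        ↔ ‖P‖ ^ 2 = 4 * cos (π / 9) ^ 2) ∧
      (‖P‖ ^ 2 = 4 * cos (π / 9) ^ 2 →
        ∃! X, X ∈ lineThrough P (rotAbout (8 * π / 9) O P) ∩
          Metric.sphere (pt 0 radius𝒞) radius𝒞) := by
  have hσk : 4 * sin (4 * π / 9) * cos (4 * π / 9) ≠ 0 := by
    have := sin_four_pi_div_nine_pos
    have := cos_four_pi_div_nine_pos
    positivity
  have hP0 : P ≠ 0 := by
    rintro rfl
    rw [mem_L_iff, inner_zero_left] at hP
    exact cos_pi_div_nine_pos.ne hP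
  have hv : rotAbout (8 * π / 9) O P - P ≠ 0 := by
    rw [← norm_ne_zero_iff, ← pow_ne_zero_iff two_ne_zero,
      show 8 * π / 9 = 2 * (4 * π / 9) by ring, norm_rotAbout_sub_sq]
    have := sin_four_pi_div_nine_pos
    have := norm_pos_iff.2 hP0
    positivity
  have hd := discrim_eq_of_mem_L0 hP
  have htangent (h : ‖P‖ ^ 2 = 4 * cos (π / 9) ^ 2) :=
    existsUnique_mem_line_inter_sphere hv radius𝒞_pos.le (by rw [hd, h]; ring)
  refine ⟨⟨fun ⟨X, hX⟩ => ?_, fun h => (htangent h).exists⟩, htangent⟩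
  have h := discrim_nonneg_of_mem_line_inter_sphere hX
  rw [hd, neg_nonneg, sq_nonpos_iff, mul_eq_zero, sub_eq_zero] at h
  exact h.resolve_left hσk

theorem gray_Z9_tangency
    (C : Set Pt) (ctr : Pt) (rad : ℝ)
    (hC : C = Metric.sphere ctr rad)
    (h1 : D (-1) ∈ C) (h2 : D (-3) ∈ C) (h3 : O ∈ C) (t : ℝ) :
    ((N₀ t ∩ C).Nonempty ↔
      (F₀ t ∈ L 0 ∩ L (-3) ∨ F₀ t ∈ L 0 ∩ L 3)) ∧
    ((F₀ t ∈ L 0 ∩ L (-3) ∨ F₀ t ∈ L 0 ∩ L 3) →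
      ∃! X : Pt, X ∈ N₀ t ∩ C) := by
  subst hC
  obtain ⟨rfl, rfl⟩ := center_radius_eq_of_mem_sphere h1 h2 h3
  have hF : F₀ t ∈ L 0 := ⟨t, by rw [F₀, zero_add]; module⟩
  rw [mem_L0_inter_L_neg_three_or_L_three_iff hF]
  exact lineThrough_rotAbout_inter_sphere_of_mem_L0 hF
end
end

section
/- Let O ∈ ℝ², let ℓ be a line with O ∉ ℓ, let θ ∈ ℝ be not an integer multiple of 2π, let ℓ' be the image of ℓ under rotation by θ about O, let P ∈ ℓ, and let P' be the image of P under rotation by θ about O (so P ≠ P'). Let O_ℓ, O_{ℓ'} and O_{PP'} be the reflections of O across ℓ, across ℓ', and across the line through P and P', respectively. Then O_ℓ, O_{ℓ'} and O_{PP'} are collinear. -/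
/- STATEMENT 2: Let ℓ be a line not through O, θ not an integer multiple of 2π, ℓ' the
rotate of ℓ by θ about O, P ∈ ℓ and P' its rotate. Then the reflections of O across
ℓ, ℓ' and the line PP' are collinear. -/

open Real

noncomputable section

/-- Euclidean dot product of two vectors of ℝ². -/
def dot (u v : Pt) : ℝ := u 0 * v 0 + u 1 * v 1

/-- `X'` is the reflection of `X` across the line `m`: the midpoint of `X` and `X'`
lies on `m`, and `X' - X` is orthogonal to the direction of `m`. -/
def IsReflection (m : Set Pt) (X X' : Pt) : Prop :=
  midpoint ℝ X X' ∈ m ∧ ∀ A ∈ m, ∀ B ∈ m, dot (X' - X) (B - A) = 0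

/-!
Put `O` at the origin and let `R` be the rotation. A reflection across a line is unique, and `R`
carries the reflection of `O` across `ℓ` to one across `ℓ' = R ℓ`, so `O_ℓ' = R O_ℓ`. As
`|P| = |R P|`, the foot of `O` on `PP'` is the midpoint of `PP'`, so `O_PP' = P + R P`.
Writing `X = O_ℓ` and `P = X / 2 + d` with `d ⊥ X`, the three points are `X`, `R X` and
`(X + R X) / 2 + (d + R d)`; both `d + R d` and `R X - X` are orthogonal to `X + R X`,
hence parallel in the plane.
-/

open scoped RealInnerProductSpace

@[simp] lemma rotAbout_apply_zero (θ : ℝ) (c p : Pt) :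
    rotAbout θ c p 0 = c 0 + cos θ * (p 0 - c 0) - sin θ * (p 1 - c 1) := by
  simp [rotAbout, pt]

@[simp] lemma rotAbout_apply_one (θ : ℝ) (c p : Pt) :
    rotAbout θ c p 1 = c 1 + sin θ * (p 0 - c 0) + cos θ * (p 1 - c 1) := by
  simp [rotAbout, pt]

lemma rotAbout_self (θ : ℝ) (c : Pt) : rotAbout θ c c = c := by
  ext i; fin_cases i <;> simp

lemma rotAbout_add_smul_sub (θ : ℝ) (c A B : Pt) (t : ℝ) :
    rotAbout θ c (A + t • (B - A)) = rotAbout θ c A + t • (rotAbout θ c B - rotAbout θ c A) := by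
  ext i
  fin_cases i <;>
    simp only [Fin.zero_eta, Fin.mk_one, Fin.isValue, rotAbout_apply_zero, rotAbout_apply_one,
      PiLp.add_apply, PiLp.smul_apply, PiLp.sub_apply, smul_eq_mul] <;> ring

lemma rotAbout_midpoint (θ : ℝ) (c X Y : Pt) :
    rotAbout θ c (midpoint ℝ X Y) = midpoint ℝ (rotAbout θ c X) (rotAbout θ c Y) := by
  ext i
  fin_cases i <;>
    simp only [midpoint_eq_smul_add, invOf_eq_inv, smul_add, Fin.zero_eta, Fin.mk_one, Fin.isValue,
      rotAbout_apply_zero, rotAbout_apply_one, PiLp.add_apply, PiLp.smul_apply, smul_eq_mul] <;> ring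

lemma dot_rotAbout_sub_rotAbout (θ : ℝ) (c X Y Z W : Pt) :
    dot (rotAbout θ c X - rotAbout θ c Y) (rotAbout θ c Z - rotAbout θ c W) =
      dot (X - Y) (Z - W) := by
  simp only [dot, PiLp.sub_apply, rotAbout_apply_zero, rotAbout_apply_one]
  linear_combination ((X 0 - Y 0) * (Z 0 - W 0) + (X 1 - Y 1) * (Z 1 - W 1)) * sin_sq_add_cos_sq θ

lemma dot_eq_inner (u v : Pt) : dot u v = ⟪u, v⟫ := by
  simp [dot, PiLp.inner_apply, Fin.sum_univ_two, mul_comm]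

lemma left_mem_lineThrough (A B : Pt) : A ∈ lineThrough A B := ⟨0, by simp⟩

lemma right_mem_lineThrough (A B : Pt) : B ∈ lineThrough A B := ⟨1, by simp⟩

lemma image_rotAbout_lineThrough (θ : ℝ) (c A B : Pt) :
    rotAbout θ c '' lineThrough A B = lineThrough (rotAbout θ c A) (rotAbout θ c B) := by
  ext X
  constructor
  · rintro ⟨_, ⟨t, rfl⟩, rfl⟩
    exact ⟨t, rotAbout_add_smul_sub θ c A B t⟩
  · rintro ⟨t, rfl⟩
    exact ⟨_, ⟨t, rfl⟩, rotAbout_add_smul_sub θ c A B t⟩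

lemma IsReflection.unique {A B X Y Z : Pt} (hY : IsReflection (lineThrough A B) X Y)
    (hZ : IsReflection (lineThrough A B) X Z) : Y = Z := by
  obtain ⟨t, ht⟩ := hY.1
  obtain ⟨s, hs⟩ := hZ.1
  rw [midpoint_eq_smul_add, invOf_eq_inv] at ht hs
  have hYZ : Y - Z = (2 * (t - s)) • (B - A) := by
    linear_combination (norm := module) (2 : ℝ) • ht - (2 : ℝ) • hs
  have horth : ⟪Y - Z, B - A⟫ = 0 := by
    have hY' := hY.2 A (left_mem_lineThrough A B) B (right_mem_lineThrough A B)
    have hZ' := hZ.2 A (left_mem_lineThrough A B) B (right_mem_lineThrough A B)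
    rw [dot_eq_inner] at hY' hZ'
    rw [show Y - Z = (Y - X) - (Z - X) by abel, inner_sub_left, hY', hZ', sub_zero]
  rw [hYZ, real_inner_smul_left] at horth
  rcases mul_eq_zero.1 horth with h | h
  · rw [← sub_eq_zero, hYZ, (by linarith : 2 * (t - s) = 0), zero_smul]
  · rw [← sub_eq_zero, hYZ, inner_self_eq_zero.1 h, smul_zero]

lemma IsReflection.map_rotAbout {m : Set Pt} {c X : Pt} (θ : ℝ) (h : IsReflection m c X) :
    IsReflection (rotAbout θ c '' m) c (rotAbout θ c X) := by
  refine ⟨⟨midpoint ℝ c X, h.1, ?_⟩, ?_⟩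
  · rw [rotAbout_midpoint, rotAbout_self]
  · rintro _ ⟨A, hA, rfl⟩ _ ⟨B, hB, rfl⟩
    have h_rot := dot_rotAbout_sub_rotAbout θ c X c B A
    rwa [rotAbout_self, h.2 A hA B hB] at h_rot

lemma isReflection_lineThrough_rotAbout (θ : ℝ) (c P : Pt) :
    IsReflection (lineThrough P (rotAbout θ c P)) c (P + rotAbout θ c P - c) := by
  refine ⟨⟨1 / 2, ?_⟩, ?_⟩
  · rw [midpoint_eq_smul_add, invOf_eq_inv]; module
  · rintro _ ⟨s, rfl⟩ _ ⟨t, rfl⟩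
    simp only [dot, PiLp.sub_apply, PiLp.add_apply, PiLp.smul_apply, smul_eq_mul,
      rotAbout_apply_zero, rotAbout_apply_one]
    linear_combination (t - s) * ((P 0 - c 0) ^ 2 + (P 1 - c 1) ^ 2) * sin_sq_add_cos_sq θ

lemma collinear_of_cross_eq_zero {p q r : Pt}
    (h : (q 0 - p 0) * (r 1 - p 1) = (q 1 - p 1) * (r 0 - p 0)) :
    Collinear ℝ ({p, q, r} : Set Pt) := by
  rcases eq_or_ne p q with rfl | hpq
  · simpa using collinear_pair ℝ p r
  rw [show ({p, q, r} : Set Pt) = {r, p, q} by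
    ext; simp only [Set.mem_insert_iff, Set.mem_singleton_iff]; tauto]
  apply collinear_insert_of_mem_affineSpan_pair
  have hqp : ⟪q - p, q - p⟫ ≠ 0 := inner_self_ne_zero.2 (sub_ne_zero.2 hpq.symm)
  -- in the plane, `|v|² w = ⟪w, v⟫ v + (v × w) v^⊥`
  have hproj : ⟪q - p, q - p⟫ • (r - p) = ⟪r - p, q - p⟫ • (q - p) := by
    simp only [← dot_eq_inner]
    ext i
    fin_cases i
    · simp only [dot, Fin.isValue, PiLp.sub_apply, Fin.zero_eta, PiLp.smul_apply, smul_eq_mul]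
      linear_combination -(q 1 - p 1) * h
    · simp only [dot, Fin.isValue, PiLp.sub_apply, Fin.mk_one, PiLp.smul_apply, smul_eq_mul]
      linear_combination (q 0 - p 0) * h
  convert AffineMap.lineMap_mem_affineSpan_pair (⟪r - p, q - p⟫ / ⟪q - p, q - p⟫) p q
  rw [AffineMap.lineMap_apply, vsub_eq_sub, vadd_eq_add, div_eq_inv_mul, mul_smul, ← hproj,
    smul_smul, inv_mul_cancel₀ hqp, one_smul, sub_add_cancel]

lemma IsReflection.collinear_rotAbout {m : Set Pt} {c X P : Pt} (θ : ℝ)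
    (hX : IsReflection m c X) (hP : P ∈ m) :
    Collinear ℝ ({X, rotAbout θ c X, P + rotAbout θ c P - c} : Set Pt) := by
  have h := hX.2 _ hX.1 P hP
  apply collinear_of_cross_eq_zero
  simp only [dot, PiLp.sub_apply, PiLp.add_apply, midpoint_eq_smul_add, invOf_eq_inv,
    PiLp.smul_apply, smul_eq_mul, rotAbout_apply_zero, rotAbout_apply_one] at h ⊢
  linear_combination (-2 * sin θ) * h +
    ((X 0 - c 0) * (P 1 - c 1) - (X 1 - c 1) * (P 0 - c 0)) * sin_sq_add_cos_sq θ

theorem reflections_collinear_general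
    (O A B : Pt)
    (θ : ℝ)
    (P : Pt) (hP : P ∈ lineThrough A B)
    (Oℓ Oℓ' OPP' : Pt)
    (h1 : IsReflection (lineThrough A B) O Oℓ)
    (h2 : IsReflection (rotAbout θ O '' lineThrough A B) O Oℓ')
    (h3 : IsReflection (lineThrough P (rotAbout θ O P)) O OPP') :
    Collinear ℝ ({Oℓ, Oℓ', OPP'} : Set Pt) := by
  have h1' := h1.map_rotAbout θ
  rw [image_rotAbout_lineThrough] at h1' h2
  rw [h2.unique h1', h3.unique (isReflection_lineThrough_rotAbout θ O P)]
  exact h1.collinear_rotAbout θ hP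

theorem reflections_collinear
    (O A B : Pt) (hAB : A ≠ B) (hO : O ∉ lineThrough A B)
    (θ : ℝ) (hθ : ∀ n : ℤ, θ ≠ n * (2 * π))
    (P : Pt) (hP : P ∈ lineThrough A B)
    (Oℓ Oℓ' OPP' : Pt)
    (h1 : IsReflection (lineThrough A B) O Oℓ)
    (h2 : IsReflection (rotAbout θ O '' lineThrough A B) O Oℓ')
    (h3 : IsReflection (lineThrough P (rotAbout θ O P)) O OPP') :
    Collinear ℝ ({Oℓ, Oℓ', OPP'} : Set Pt) :=
  reflections_collinear_general O A B θ P hP Oℓ Oℓ' OPP' h1 h2 h3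
end
end

section
/- There exists a geometric realization (p, L) of the Gray configuration in the plane together with a point c ∈ ℝ² such that the counterclockwise rotation ρ by 2π/3 about c satisfies ρ(p(v)) = p(v + (1,1,1)) for every v ∈ (ℤ/3ℤ)³, and ρ maps the line L(ℓ) onto the line L(ℓ + (1,1,1)) for every combinatorial line ℓ. (This is the polycyclic realization of the Gray configuration with ℤ₃ rotational symmetry whose reduced Levi graph is the Pappus graph.) -/
/-! Place the point `v` at `(x v, √3 · y v)`, with integers `x v`, `y v` taken from an
explicit table. In such coordinates the rotation by `2π/3` about the origin is the rational map
`(x, y) ↦ ((-x - 3y)/2, (x - y)/2)`, and three points are collinear iff an integer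
determinant vanishes. Injectivity, equivariance and "collinear exactly along the 27 lines"
thus become finite integer checks, done by `decide`. Each line is realized as the line
through the images of any two of its points. -/

open Real

noncomputable section

/-- A subset of the plane is an affine line iff it is the line through two distinct points. -/
def IsAffineLine (S : Set Pt) : Prop := ∃ A B : Pt, A ≠ B ∧ S = lineThrough A B

/-- Points of the Gray configuration: elements of (ℤ/3ℤ)³. -/
abbrev GPt := Fin 3 → ZMod 3

/-- The combinatorial line through `v` in coordinate direction `k`. -/
def grayLine (v : GPt) (k : Fin 3) : Set GPt :=
  {w | ∃ t : ZMod 3, w = v + t • (Pi.single k 1 : GPt)}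

/-- The combinatorial lines of the Gray configuration. -/
def IsGrayLine (ℓ : Set GPt) : Prop := ∃ v k, ℓ = grayLine v k

/-- The type of combinatorial lines of the Gray configuration. -/
abbrev GrayLine := {ℓ : Set GPt // IsGrayLine ℓ}

namespace GrayRealization

@[simp] lemma pt_apply_zero (x y : ℝ) : pt x y 0 = x := rfl
@[simp] lemma pt_apply_one (x y : ℝ) : pt x y 1 = y := rfl

lemma eq_iff_coords {P Q : Pt} : P = Q ↔ P 0 = Q 0 ∧ P 1 = Q 1 :=
  ⟨by rintro rfl; simp, fun ⟨h0, h1⟩ => PiLp.ext (Fin.forall_fin_two.2 ⟨h0, h1⟩)⟩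

lemma mem_lineThrough_iff {A B : Pt} (hAB : A ≠ B) (P : Pt) :
    P ∈ lineThrough A B ↔ (P 0 - A 0) * (B 1 - A 1) = (P 1 - A 1) * (B 0 - A 0) := by
  constructor
  · rintro ⟨t, rfl⟩
    simp only [PiLp.add_apply, PiLp.smul_apply, PiLp.sub_apply, smul_eq_mul]
    ring
  · intro hP
    by_cases h0 : A 0 = B 0
    · have h1 : B 1 - A 1 ≠ 0 := sub_ne_zero.2 fun h1 => hAB (eq_iff_coords.2 ⟨h0, h1.symm⟩)
      have hPA : P 0 = A 0 := by
        have h : (P 0 - A 0) * (B 1 - A 1) = 0 := by rw [hP, h0, sub_self, mul_zero]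
        exact sub_eq_zero.1 ((mul_eq_zero.1 h).resolve_right h1)
      refine ⟨(P 1 - A 1) / (B 1 - A 1), eq_iff_coords.2 ⟨?_, ?_⟩⟩ <;>
        simp only [PiLp.add_apply, PiLp.smul_apply, PiLp.sub_apply, smul_eq_mul]
      · rw [hPA, h0]; ring
      · field_simp; ring
    · have h1 : B 0 - A 0 ≠ 0 := sub_ne_zero.2 (Ne.symm h0)
      refine ⟨(P 0 - A 0) / (B 0 - A 0), eq_iff_coords.2 ⟨?_, ?_⟩⟩ <;>
        simp only [PiLp.add_apply, PiLp.smul_apply, PiLp.sub_apply, smul_eq_mul] <;>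
        field_simp
      · ring
      · linear_combination -hP

lemma lineThrough_eq_of_mem {A B C D : Pt} (hC : C ∈ lineThrough A B)
    (hD : D ∈ lineThrough A B) (hCD : C ≠ D) : lineThrough C D = lineThrough A B := by
  obtain ⟨s, rfl⟩ := hC
  obtain ⟨s', rfl⟩ := hD
  have hs : s' - s ≠ 0 := sub_ne_zero.2 fun h => hCD (by rw [h])
  ext P
  constructor
  · rintro ⟨t, rfl⟩
    exact ⟨s + t * (s' - s), by module⟩
  · rintro ⟨r, rfl⟩
    refine ⟨(r - s) / (s' - s), ?_⟩
    match_scalars <;> field_simp <;> ring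

lemma rotAbout_add_smul_sub (θ : ℝ) (c A B : Pt) (t : ℝ) :
    rotAbout θ c (A + t • (B - A)) = rotAbout θ c A + t • (rotAbout θ c B - rotAbout θ c A) := by
  refine eq_iff_coords.2 ⟨?_, ?_⟩ <;>
    simp only [rotAbout, pt_apply_zero, pt_apply_one, PiLp.add_apply, PiLp.smul_apply,
      PiLp.sub_apply, smul_eq_mul] <;>
    ring

lemma image_rotAbout_lineThrough (θ : ℝ) (c A B : Pt) :
    rotAbout θ c '' lineThrough A B = lineThrough (rotAbout θ c A) (rotAbout θ c B) := by
  ext P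
  constructor
  · rintro ⟨Q, ⟨t, rfl⟩, rfl⟩
    exact ⟨t, rotAbout_add_smul_sub θ c A B t⟩
  · rintro ⟨t, rfl⟩
    exact ⟨A + t • (B - A), ⟨t, rfl⟩, rotAbout_add_smul_sub θ c A B t⟩

def ptSqrt3 (a b : ℝ) : Pt := pt a (b * √3)

lemma sqrt3_ne_zero : √3 ≠ 0 := by positivity

lemma ptSqrt3_inj {a b a' b' : ℝ} : ptSqrt3 a b = ptSqrt3 a' b' ↔ a = a' ∧ b = b' := by
  simp [ptSqrt3, eq_iff_coords]

lemma ptSqrt3_mem_lineThrough_iff {a₀ b₀ a₁ b₁ : ℝ} (h : ptSqrt3 a₀ b₀ ≠ ptSqrt3 a₁ b₁)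
    (a b : ℝ) : ptSqrt3 a b ∈ lineThrough (ptSqrt3 a₀ b₀) (ptSqrt3 a₁ b₁) ↔
      (a - a₀) * (b₁ - b₀) = (b - b₀) * (a₁ - a₀) := by
  rw [mem_lineThrough_iff h]
  simp only [ptSqrt3, pt_apply_zero, pt_apply_one]
  constructor
  · intro hP
    exact mul_left_cancel₀ sqrt3_ne_zero (by linear_combination hP)
  · intro hP
    linear_combination √3 * hP

lemma rotAbout_two_pi_div_three_ptSqrt3 (a b : ℝ) :
    rotAbout (2 * π / 3) (pt 0 0) (ptSqrt3 a b) = ptSqrt3 ((-a - 3 * b) / 2) ((a - b) / 2) := by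
  have hθ : 2 * π / 3 = π - π / 3 := by ring
  have h3 : √3 * √3 = 3 := Real.mul_self_sqrt (by norm_num)
  refine eq_iff_coords.2 ⟨?_, ?_⟩ <;>
    simp only [rotAbout, ptSqrt3, pt_apply_zero, pt_apply_one, hθ, Real.cos_pi_sub,
      Real.sin_pi_sub, Real.cos_pi_div_three, Real.sin_pi_div_three]
  · linear_combination (-b / 2) * h3
  · ring

lemma self_ne_add_single (v : GPt) (k : Fin 3) : v ≠ v + Pi.single k 1 := by
  simp

lemma mem_grayLine_self (v : GPt) (k : Fin 3) : v ∈ grayLine v k :=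
  ⟨0, by simp⟩

lemma add_single_mem_grayLine (v : GPt) (k : Fin 3) : v + Pi.single k 1 ∈ grayLine v k :=
  ⟨1, by simp⟩

lemma image_add_grayLine (v w : GPt) (k : Fin 3) :
    (fun u => u + w) '' grayLine v k = grayLine (v + w) k := by
  ext u
  constructor
  · rintro ⟨u, ⟨t, rfl⟩, rfl⟩
    exact ⟨t, add_right_comm v _ w⟩
  · rintro ⟨t, rfl⟩
    exact ⟨v + t • Pi.single k 1, ⟨t, rfl⟩, add_right_comm v _ w⟩

/-- `decide` cannot enumerate `GPt` directly, but can enumerate explicit vectors `![a, b, c]`. -/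
lemma forall_gpt {P : GPt → Prop} (h : ∀ a b c, P ![a, b, c]) (v : GPt) : P v := by
  have hv : v = ![v 0, v 1, v 2] := by
    funext i
    fin_cases i <;> rfl
  exact hv ▸ h _ _ _

section Realization

variable {p : GPt → Pt}

def spannedLine (p : GPt → Pt) (ℓ : GrayLine) : Set Pt :=
  {P | ∃ a ∈ ℓ.1, ∃ b ∈ ℓ.1, a ≠ b ∧ P ∈ lineThrough (p a) (p b)}

variable (hp : Function.Injective p)
  (hcol : ∀ v k w, p w ∈ lineThrough (p v) (p (v + Pi.single k 1)) ↔ w ∈ grayLine v k)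
include hp hcol

lemma spannedLine_eq {ℓ : GrayLine} {v : GPt} {k : Fin 3} (hℓ : ℓ.1 = grayLine v k) :
    spannedLine p ℓ = lineThrough (p v) (p (v + Pi.single k 1)) := by
  ext P
  constructor
  · rintro ⟨a, ha, b, hb, hab, hP⟩
    rw [hℓ, ← hcol] at ha hb
    rwa [← lineThrough_eq_of_mem ha hb (hp.ne hab)]
  · intro hP
    exact ⟨v, hℓ ▸ mem_grayLine_self v k, _, hℓ ▸ add_single_mem_grayLine v k,
      self_ne_add_single v k, hP⟩

lemma mem_spannedLine_iff (w : GPt) (ℓ : GrayLine) : p w ∈ spannedLine p ℓ ↔ w ∈ ℓ.1 := by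
  obtain ⟨v, k, hℓ⟩ := ℓ.2
  rw [spannedLine_eq hp hcol hℓ, hcol, hℓ]

lemma spannedLine_injective : Function.Injective (spannedLine p) := by
  intro ℓ ℓ' h
  ext w
  rw [← mem_spannedLine_iff hp hcol w ℓ, ← mem_spannedLine_iff hp hcol w ℓ', h]

lemma isAffineLine_spannedLine (ℓ : GrayLine) : IsAffineLine (spannedLine p ℓ) := by
  obtain ⟨v, k, hℓ⟩ := ℓ.2
  exact ⟨_, _, hp.ne (self_ne_add_single v k), spannedLine_eq hp hcol hℓ⟩

lemma image_rotAbout_spannedLine {θ : ℝ} {c : Pt} {w : GPt}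
    (hrot : ∀ v, rotAbout θ c (p v) = p (v + w)) {ℓ ℓ' : GrayLine}
    (h : ℓ'.1 = (fun u => u + w) '' ℓ.1) :
    rotAbout θ c '' spannedLine p ℓ = spannedLine p ℓ' := by
  obtain ⟨v, k, hℓ⟩ := ℓ.2
  have hℓ' : ℓ'.1 = grayLine (v + w) k := by rw [h, hℓ, image_add_grayLine]
  rw [spannedLine_eq hp hcol hℓ, spannedLine_eq hp hcol hℓ', image_rotAbout_lineThrough,
    hrot, hrot, add_right_comm]

end Realization

def xTable : Fin 3 → Fin 3 → Fin 3 → ℤ :=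
  ![![![820, -320, -92], ![130, -380, -2420], ![268, -620, 490]],
    ![![-245, -272, -380], ![304, -920, 610], ![2500, -110, 412]],
    ![![-32, -80, -20], ![1000, -245, 4], ![-290, -212, 100]]]

def yTable : Fin 3 → Fin 3 → Fin 3 → ℤ :=
  ![![![340, -300, -172], ![30, -148, -860], ![92, 460, 0]],
    ![![245, 88, -540], ![40, 240, -10], ![-780, 50, -116]],
    ![![264, 1640, -80], ![80, -245, -180], ![310, 132, -580]]]

def xCoord (v : GPt) : ℤ := xTable (v 0) (v 1) (v 2)

def yCoord (v : GPt) : ℤ := yTable (v 0) (v 1) (v 2)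

lemma eq_of_coords_eq : ∀ v w : GPt, xCoord v = xCoord w → yCoord v = yCoord w → v = w :=
  forall_gpt fun a b c => forall_gpt fun d e f => by
    revert a b c d e f
    decide

lemma mem_grayLine_iff_coords : ∀ (v : GPt) (k : Fin 3) (w : GPt), w ∈ grayLine v k ↔
    (xCoord w - xCoord v) * (yCoord (v + Pi.single k 1) - yCoord v) =
      (yCoord w - yCoord v) * (xCoord (v + Pi.single k 1) - xCoord v) :=
  forall_gpt fun a b c k => forall_gpt fun d e f => by
    simp only [grayLine, Set.mem_ofPred_eq]
    revert a b c k d e f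
    decide

lemma coords_add_diag : ∀ v : GPt,
    xCoord (v + ![1, 1, 1]) * 2 = -xCoord v - 3 * yCoord v ∧
      yCoord (v + ![1, 1, 1]) * 2 = xCoord v - yCoord v :=
  forall_gpt <| by decide

def grayPoint (v : GPt) : Pt := ptSqrt3 (xCoord v) (yCoord v)

lemma grayPoint_injective : Function.Injective grayPoint := fun v w h => by
  obtain ⟨hx, hy⟩ := ptSqrt3_inj.1 h
  exact eq_of_coords_eq v w (mod_cast hx) (mod_cast hy)

lemma grayPoint_mem_lineThrough_iff (v : GPt) (k : Fin 3) (w : GPt) :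
    grayPoint w ∈ lineThrough (grayPoint v) (grayPoint (v + Pi.single k 1)) ↔
      w ∈ grayLine v k := by
  rw [grayPoint, grayPoint, grayPoint,
    ptSqrt3_mem_lineThrough_iff (grayPoint_injective.ne (self_ne_add_single v k)),
    mem_grayLine_iff_coords]
  exact_mod_cast Iff.rfl

lemma rotAbout_grayPoint (v : GPt) :
    rotAbout (2 * π / 3) (pt 0 0) (grayPoint v) = grayPoint (v + ![1, 1, 1]) := by
  obtain ⟨hx, hy⟩ := coords_add_diag v
  rw [grayPoint, rotAbout_two_pi_div_three_ptSqrt3, grayPoint, ptSqrt3_inj,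
    div_eq_iff two_ne_zero, div_eq_iff two_ne_zero]
  exact ⟨mod_cast hx.symm, mod_cast hy.symm⟩

end GrayRealization

open GrayRealization in
theorem gray_polycyclic_realization_Pappus_RLG :
    ∃ (p : GPt → Pt) (L : GrayLine → Set Pt) (c : Pt),
      Function.Injective p ∧ Function.Injective L ∧
      (∀ ℓ : GrayLine, IsAffineLine (L ℓ)) ∧
      (∀ (v : GPt) (ℓ : GrayLine), p v ∈ L ℓ ↔ v ∈ ℓ.1) ∧
      (∀ v : GPt, rotAbout (2 * π / 3) c (p v) = p (v + ![1, 1, 1])) ∧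
      (∀ ℓ ℓ' : GrayLine, ℓ'.1 = (fun u => u + ![1, 1, 1]) '' ℓ.1 →
        rotAbout (2 * π / 3) c '' L ℓ = L ℓ') := by
  have hcol := grayPoint_mem_lineThrough_iff
  exact ⟨grayPoint, spannedLine grayPoint, pt 0 0, grayPoint_injective,
    spannedLine_injective grayPoint_injective hcol,
    isAffineLine_spannedLine grayPoint_injective hcol,
    mem_spannedLine_iff grayPoint_injective hcol, rotAbout_grayPoint,
    fun _ _ => image_rotAbout_spannedLine grayPoint_injective hcol rotAbout_grayPoint⟩
end
end

section
/- The automorphism group of the Gray graph is isomorphic to the wreath product S₃ ≀ S₃, that is, to the semidirect product (S₃ × S₃ × S₃) ⋊ S₃ in which S₃ denotes the symmetric group on 3 letters and the outer S₃ acts on S₃ × S₃ × S₃ by permuting the three direct factors. -/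
/- STATEMENT 8: The automorphism group of the Gray graph is isomorphic to the wreath
product S₃ ≀ S₃, i.e. to the semidirect product (S₃ × S₃ × S₃) ⋊ S₃ where the outer S₃
permutes the three direct factors. Here the automorphism group is formalized as the
subgroup of permutations of the vertex set preserving adjacency, S₃ as `Equiv.Perm (Fin 3)`,
S₃ × S₃ × S₃ as `Fin 3 → Equiv.Perm (Fin 3)`, and the permutation action of the outer S₃
on the triple product is the homomorphism `permuteFactors`. -/

noncomputable section

/-- The Gray graph: the bipartite incidence graph of the Gray configuration. -/
def grayGraph : SimpleGraph (GPt ⊕ GrayLine) where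
  Adj x y :=
    (∃ (v : GPt) (ℓ : GrayLine), x = Sum.inl v ∧ y = Sum.inr ℓ ∧ v ∈ ℓ.1) ∨
    (∃ (v : GPt) (ℓ : GrayLine), x = Sum.inr ℓ ∧ y = Sum.inl v ∧ v ∈ ℓ.1)
  symm := by
    constructor
    rintro x y (⟨v, ℓ, hx, hy, hm⟩ | ⟨v, ℓ, hx, hy, hm⟩)
    · exact Or.inr ⟨v, ℓ, hy, hx, hm⟩
    · exact Or.inl ⟨v, ℓ, hy, hx, hm⟩
  loopless := by
    constructor
    rintro x (⟨v, ℓ, hx, hy, _⟩ | ⟨v, ℓ, hx, hy, _⟩) <;> subst hx <;> simp at hy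

/-- The automorphism group of the Gray graph, as the subgroup of permutations of the
vertex set preserving adjacency. -/
def grayAut : Subgroup (Equiv.Perm (GPt ⊕ GrayLine)) where
  carrier := {σ | ∀ x y, grayGraph.Adj (σ x) (σ y) ↔ grayGraph.Adj x y}
  one_mem' := by intro x y; simp
  mul_mem' := by
    intro σ τ hσ hτ x y
    simpa [Equiv.Perm.mul_apply] using (hσ (τ x) (τ y)).trans (hτ x y)
  inv_mem' := by
    intro σ hσ x y
    simpa using (hσ (σ⁻¹ x) (σ⁻¹ y)).symm

/-- The action of the outer S₃ on S₃ × S₃ × S₃ = (Fin 3 → S₃) permuting the three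
direct factors. -/
def permuteFactors : Equiv.Perm (Fin 3) →* MulAut (Fin 3 → Equiv.Perm (Fin 3)) where
  toFun σ :=
    { toFun := fun f i => f (σ⁻¹ i)
      invFun := fun f i => f (σ i)
      left_inv := fun f => by funext i; simp
      right_inv := fun f => by funext i; simp
      map_mul' := fun f g => rfl }
  map_one' := by ext f i; simp
  map_mul' := by intro σ τ; ext f i; simp [mul_inv_rev]

/-!
An automorphism of the Gray graph cannot exchange points and lines: a line has a parallel
line, sharing no point with it, to which it is joined by three transversals, whereas two
distinct non-collinear points of `(ℤ/3ℤ)³` have at most two common collinear points. So an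
automorphism restricts to a permutation of the points preserving collinearity, that is, to an
automorphism of the Hamming graph `H(3, 3)`; and it is determined by this restriction, because
no two vertices of the Gray graph have the same neighbourhood.

An automorphism `p` of a Hamming graph maps the line through a point `c` in direction `k` onto
a line, in a direction `π k`, and `π` is a permutation. Reading off the coordinate `π k` of the
images of the points of that line gives a permutation `n (π k)` of the alphabet, and `(n, π)`
agrees with `p` on all lines through `c`. A point at distance at least two from `c` has two
neighbours closer to `c` whose only common neighbours are that point and one closer still, so
induction on the distance to `c` shows that `(n, π)` agrees with `p` everywhere.
-/

open Function Equiv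

theorem hammingDist_update_lt {ι α : Type*} [Fintype ι] [DecidableEq ι] [DecidableEq α]
    {x c : ι → α} {i : ι} (hi : x i ≠ c i) :
    hammingDist (update x i (c i)) c < hammingDist x c := by
  refine Finset.card_lt_card
    ((Finset.ssubset_iff_of_subset fun m hm => ?_).mpr ⟨i, by simpa, by simp⟩)
  simp only [Finset.mem_filter, Finset.mem_univ, true_and] at hm ⊢
  by_cases hmi : m = i
  · simp [hmi] at hm
  · simpa [update_of_ne hmi] using hm

def hammingGraph (ι α : Type*) : SimpleGraph (ι → α) where
  Adj x y := ∃ k, x k ≠ y k ∧ ∀ j ≠ k, x j = y j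
  symm := ⟨fun _ _ ⟨k, hk, h⟩ => ⟨k, hk.symm, fun j hj => (h j hj).symm⟩⟩
  loopless := ⟨fun _ ⟨_, hk, _⟩ => hk rfl⟩

/-- `(n, π)` first moves coordinate `j` to `π j`, then applies `n i` in coordinate `i`; this is
the convention of `permuteFactors`, so that `(n, π) ↦ wreathPerm n π` is multiplicative. -/
def wreathPerm {ι α : Type*} (n : ι → Perm α) (π : Perm ι) : Perm (ι → α) where
  toFun x i := n i (x (π⁻¹ i))
  invFun y j := (n (π j))⁻¹ (y (π j))
  left_inv x := by funext j; simp
  right_inv y := by funext i; simp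

section WreathPerm

variable {ι α : Type*}

@[simp]
theorem wreathPerm_apply (n : ι → Perm α) (π : Perm ι) (x : ι → α) (i : ι) :
    wreathPerm n π x i = n i (x (π⁻¹ i)) :=
  rfl

theorem wreathPerm_agree_iff (n : ι → Perm α) (π : Perm ι) {x y : ι → α} {k : ι} :
    (∀ j ≠ π k, wreathPerm n π x j = wreathPerm n π y j) ↔ ∀ j ≠ k, x j = y j := by
  simp only [wreathPerm_apply, (n _).apply_eq_iff_eq]
  refine ⟨fun h j hj => by simpa using h (π j) (π.injective.ne hj), fun h j hj => h _ ?_⟩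
  rintro rfl
  simp at hj

theorem eq_one_of_wreathPerm_eq_one [Nontrivial α] {n : ι → Perm α} {π : Perm ι}
    (h : wreathPerm n π = 1) : n = 1 ∧ π = 1 := by
  have hx : ∀ (x : ι → α) i, n i (x (π⁻¹ i)) = x i := fun x i =>
    congrFun (Equiv.ext_iff.mp h x) i
  have hn : n = 1 := funext fun i => Equiv.ext fun a => hx (fun _ => a) i
  refine ⟨hn, inv_eq_one.mp (Equiv.ext fun i => ?_)⟩
  by_contra hi
  change π⁻¹ i ≠ i at hi
  obtain ⟨a, b, hab⟩ := exists_pair_ne α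
  classical
  have := hx (update (fun _ => a) i b) i
  rw [hn, update_of_ne hi, update_self] at this
  exact hab this

end WreathPerm

namespace hammingGraph

variable {ι α : Type*}

theorem adj_def {x y : ι → α} :
    (hammingGraph ι α).Adj x y ↔ ∃ k, x k ≠ y k ∧ ∀ j ≠ k, x j = y j :=
  Iff.rfl

theorem adj_iff {x y : ι → α} :
    (hammingGraph ι α).Adj x y ↔ x ≠ y ∧ ∃ k, ∀ j ≠ k, x j = y j := by
  rw [adj_def]
  refine ⟨fun ⟨k, hk, h⟩ => ⟨fun hxy => hk (congrFun hxy k), k, h⟩,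
    fun ⟨hxy, k, h⟩ => ⟨k, fun hk => hxy (funext fun j => ?_), h⟩⟩
  by_cases hj : j = k
  · exact hj ▸ hk
  · exact h j hj

theorem wreathPerm_adj_iff (n : ι → Perm α) (π : Perm ι) {x y : ι → α} :
    (hammingGraph ι α).Adj (wreathPerm n π x) (wreathPerm n π y) ↔
      (hammingGraph ι α).Adj x y := by
  rw [adj_iff, adj_iff, (wreathPerm n π).injective.ne_iff]
  refine and_congr_right fun _ =>
    ⟨fun ⟨k, hk⟩ => ⟨π⁻¹ k, ?_⟩, fun ⟨k, hk⟩ => ⟨π k, ?_⟩⟩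
  · exact (wreathPerm_agree_iff n π).mp (by simpa using hk)
  · exact (wreathPerm_agree_iff n π).mpr hk

theorem agree_of_adj_of_adj_of_adj {u v w : ι → α} {k : ι} (huv : (hammingGraph ι α).Adj u v)
    (huw : (hammingGraph ι α).Adj u w) (hvw : (hammingGraph ι α).Adj v w)
    (hk : ∀ j ≠ k, u j = v j) : ∀ j ≠ k, u j = w j := by
  obtain ⟨-, k', huw⟩ := adj_iff.mp huw
  obtain ⟨-, k'', hvw⟩ := adj_iff.mp hvw
  intro j hj
  by_contra hne
  have hj' : j = k' := by_contra fun h => hne (huw j h)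
  have hj'' : j = k'' := by_contra fun h => hne ((hk j hj).trans (hvw j h))
  subst hj' hj''
  refine (adj_iff.mp huv).1 (funext fun m => ?_)
  by_cases hm : m = k
  · subst hm
    exact (huw m (Ne.symm hj)).trans (hvw m (Ne.symm hj)).symm
  · exact hk m hm

variable [DecidableEq ι]

theorem adj_update_update (x : ι → α) (k : ι) {s t : α} (hst : s ≠ t) :
    (hammingGraph ι α).Adj (update x k s) (update x k t) :=
  adj_def.mpr ⟨k, by simpa, fun j hj => by simp [update_of_ne hj]⟩

theorem adj_update (x : ι → α) (k : ι) {t : α} (ht : x k ≠ t) :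
    (hammingGraph ι α).Adj x (update x k t) := by
  simpa using adj_update_update x k ht

theorem not_adj_update_update {c : ι → α} {k k' : ι} (hk : k ≠ k') {s t : α}
    (hs : s ≠ c k) (ht : t ≠ c k') :
    ¬ (hammingGraph ι α).Adj (update c k s) (update c k' t) := by
  rintro ⟨m, -, h⟩
  obtain rfl | hm := eq_or_ne m k
  · exact ht (by simpa [update_of_ne hk.symm] using (h k' hk.symm).symm)
  · exact hs (by simpa [update_of_ne hk] using h k hm.symm)

theorem eq_or_eq_of_adj_of_adj {x a b z : ι → α} {i j : ι} (hij : i ≠ j)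
    (hai : x i ≠ a i) (ha : ∀ m ≠ i, x m = a m)
    (hbj : x j ≠ b j) (hb : ∀ m ≠ j, x m = b m)
    (hza : (hammingGraph ι α).Adj z a) (hzb : (hammingGraph ι α).Adj z b) :
    z = x ∨ z = update a j (b j) := by
  obtain ⟨-, k, hza⟩ := adj_iff.mp hza
  obtain ⟨-, k', hzb⟩ := adj_iff.mp hzb
  by_cases hzi : z i = x i
  · have hk : k = i := by_contra fun h => hai (hzi ▸ hza i (Ne.symm h))
    subst hk
    left
    funext m
    by_cases hm : m = k
    · exact hm ▸ hzi
    · exact (hza m hm).trans (ha m hm).symm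
  · have hk' : k' = i := by_contra fun h => hzi ((hzb i (Ne.symm h)).trans (hb i hij).symm)
    subst hk'
    have hk : k = j := by_contra fun h =>
      hbj ((ha j hij.symm).trans ((hza j (Ne.symm h)).symm.trans (hzb j hij.symm)))
    subst hk
    right
    funext m
    by_cases hm : m = k
    · subst hm; simpa using hzb m hij.symm
    · simpa [update_of_ne hm] using hza m hm

theorem exists_commonNeighbors_subset_pair {a b : ι → α} (hab : a ≠ b)
    (hnadj : ¬ (hammingGraph ι α).Adj a b) :
    ∃ z₁ z₂, (hammingGraph ι α).commonNeighbors a b ⊆ {z₁, z₂} := by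
  rcases Set.eq_empty_or_nonempty ((hammingGraph ι α).commonNeighbors a b) with
    h | ⟨x, hxa, hxb⟩
  · exact ⟨a, a, h ▸ Set.empty_subset _⟩
  obtain ⟨i, hai, ha⟩ := adj_def.mp hxa.symm
  obtain ⟨j, hbj, hb⟩ := adj_def.mp hxb.symm
  have hij : i ≠ j := by
    rintro rfl
    exact hnadj (adj_iff.mpr ⟨hab, i, fun m hm => (ha m hm).symm.trans (hb m hm)⟩)
  exact ⟨x, update a j (b j), fun z ⟨hza, hzb⟩ =>
    eq_or_eq_of_adj_of_adj hij hai ha hbj hb hza.symm hzb.symm⟩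

theorem apply_eq_self_of_forall_update [Fintype ι] [DecidableEq α]
    {r : (ι → α) → (ι → α)} (hr : Injective r)
    (hadj : ∀ u v, (hammingGraph ι α).Adj u v → (hammingGraph ι α).Adj (r u) (r v))
    (c : ι → α) (hc : ∀ k t, r (update c k t) = update c k t) (x : ι → α) : r x = x := by
  induction hd : hammingDist x c using Nat.strong_induction_on generalizing x with
  | _ d ih =>
  by_cases hx : ∃ i j, i ≠ j ∧ x i ≠ c i ∧ x j ≠ c j
  · obtain ⟨i, j, hij, hi, hj⟩ := hx
    have fix : ∀ y, hammingDist y c < d → r y = y := fun y hy => ih _ hy y rfl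
    set a := update x i (c i)
    set b := update x j (c j)
    have hdist_a := hd ▸ hammingDist_update_lt hi
    have hdist_y : hammingDist (update a j (c j)) c < d :=
      (hammingDist_update_lt (by simpa [a, update_of_ne hij.symm] using hj)).trans hdist_a
    have hra : (hammingGraph ι α).Adj (r x) a := fix a hdist_a ▸ hadj _ _ (adj_update x i hi)
    have hrb : (hammingGraph ι α).Adj (r x) b :=
      fix b (hd ▸ hammingDist_update_lt hj) ▸ hadj _ _ (adj_update x j hj)
    rcases eq_or_eq_of_adj_of_adj hij (by simpa [a]) (fun m hm => (update_of_ne hm ..).symm)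
        (by simpa [b]) (fun m hm => (update_of_ne hm ..).symm) hra hrb with h | h
    · exact h
    · have hxy : x = update a j (b j) := hr (h.trans (fix _ (by simpa [b] using hdist_y)).symm)
      exact absurd (congrFun hxy j) (by simpa [b] using hj)
  · push Not at hx
    by_cases hk : ∃ k, x k ≠ c k
    · obtain ⟨k, hk⟩ := hk
      have hxk : x = update c k (x k) := by
        funext m
        by_cases hm : m = k
        · simp [hm]
        · simpa [update_of_ne hm] using hx k m (Ne.symm hm) hk
      rw [hxk, hc]
    · push Not at hk
      obtain rfl : x = c := funext hk
      rcases isEmpty_or_nonempty ι with hι | ⟨⟨k⟩⟩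
      · exact Subsingleton.elim _ _
      · simpa using hc k (x k)

theorem exists_direction_image_line [Nontrivial α] {p : (ι → α) → (ι → α)}
    (hp : ∀ u v, (hammingGraph ι α).Adj u v → (hammingGraph ι α).Adj (p u) (p v))
    (c : ι → α) (k : ι) : ∃ d, ∀ t, ∀ m ≠ d, p (update c k t) m = p c m := by
  obtain ⟨t₀, ht₀⟩ := exists_ne (c k)
  obtain ⟨d, -, hd⟩ := hp _ _ (adj_update c k ht₀.symm)
  refine ⟨d, fun t m hm => ?_⟩
  by_cases htc : t = c k
  · simp [htc]
  by_cases htt₀ : t = t₀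
  · exact htt₀ ▸ (hd m hm).symm
  exact (agree_of_adj_of_adj_of_adj (hp _ _ (adj_update c k ht₀.symm))
    (hp _ _ (adj_update c k (Ne.symm htc))) (hp _ _ (adj_update_update c k (Ne.symm htt₀)))
    hd m hm).symm

theorem injective_direction_image_line [Nontrivial α] {p : (ι → α) → (ι → α)}
    (hinj : Injective p)
    (hp : ∀ u v, (hammingGraph ι α).Adj (p u) (p v) → (hammingGraph ι α).Adj u v)
    {c : ι → α} {d : ι → ι} (hd : ∀ k t, ∀ m ≠ d k, p (update c k t) m = p c m) :
    Injective d := by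
  intro k k' hkk'
  by_contra hne
  obtain ⟨t, ht⟩ := exists_ne (c k)
  obtain ⟨s, hs⟩ := exists_ne (c k')
  have hne' : update c k t ≠ update c k' s := fun h =>
    ht (by simpa [update_of_ne hne] using congrFun h k)
  refine not_adj_update_update hne ht hs
    (hp _ _ (adj_iff.mpr ⟨hinj.ne hne', d k, fun m hm => ?_⟩))
  rw [hd k t m hm, hd k' s m (hkk' ▸ hm)]

theorem exists_wreathPerm_eq_on_lines [Finite α] {p : (ι → α) → (ι → α)}
    (hinj : Injective p)
    {c : ι → α} {π : Perm ι} (hd : ∀ k t, ∀ m ≠ π k, p (update c k t) m = p c m) :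
    ∃ n : ι → Perm α, ∀ k t, p (update c k t) = wreathPerm n π (update c k t) := by
  have hg : ∀ i, Injective fun t => p (update c (π⁻¹ i) t) i := by
    intro i t s hts
    refine update_injective c (π⁻¹ i) (hinj (funext fun m => ?_))
    by_cases hm : m = i
    · exact hm ▸ hts
    · rw [hd _ t m (by simpa using hm), hd _ s m (by simpa using hm)]
  refine ⟨fun i => Equiv.ofBijective _ (Finite.injective_iff_bijective.mp (hg i)),
    fun k t => ?_⟩
  funext m
  by_cases hm : m = π k
  · subst hm
    simp
  · have hm' : π⁻¹ m ≠ k := fun h => hm (by simp [← h])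
    rw [wreathPerm_apply, update_of_ne hm', hd k t m hm]
    simp

theorem exists_eq_wreathPerm [Fintype ι] [Finite α] [DecidableEq α] [Nontrivial α]
    {p : (ι → α) → (ι → α)} (hinj : Injective p)
    (hp : ∀ u v, (hammingGraph ι α).Adj (p u) (p v) ↔ (hammingGraph ι α).Adj u v) :
    ∃ n π, p = wreathPerm n π := by
  obtain ⟨c⟩ : Nonempty (ι → α) := inferInstance
  choose d hd using exists_direction_image_line (fun u v => (hp u v).mpr) c
  let π := Equiv.ofBijective d (Finite.injective_iff_bijective.mp
    (injective_direction_image_line hinj (fun u v => (hp u v).mp) hd))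
  obtain ⟨n, hn⟩ := exists_wreathPerm_eq_on_lines hinj (π := π) hd
  refine ⟨n, π, funext fun x => (Equiv.symm_apply_eq _).mp ?_⟩
  refine apply_eq_self_of_forall_update (r := fun x => (wreathPerm n π).symm (p x))
    ((wreathPerm n π).symm.injective.comp hinj) (fun u v huv => ?_) c
    (fun k t => by simp [hn k t]) x
  rw [← wreathPerm_adj_iff n π]
  simpa using (hp u v).mpr huv

end hammingGraph

namespace SimpleGraph

variable {V V' : Type*} {G : SimpleGraph V} {G' : SimpleGraph V'}

theorem Iso.image_commonNeighbors (e : G ≃g G') (x y : V) :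
    e '' G.commonNeighbors x y = G'.commonNeighbors (e x) (e y) := by
  simp only [commonNeighbors, Set.image_inter e.injective, Iso.image_neighborSet]

theorem Iso.commonNeighbors_nonempty_iff (e : G ≃g G') {x y : V} :
    (G'.commonNeighbors (e x) (e y)).Nonempty ↔ (G.commonNeighbors x y).Nonempty := by
  rw [← e.image_commonNeighbors, Set.image_nonempty]

theorem Iso.apply_eq_of_eqOn_neighborSet (hG' : Injective G'.neighborSet) (e₁ e₂ : G ≃g G')
    {x : V} (h : Set.EqOn e₁ e₂ (G.neighborSet x)) : e₁ x = e₂ x :=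
  hG' (by rw [← e₁.image_neighborSet, ← e₂.image_neighborSet, h.image_eq])

/-- In the Gray graph exactly the line-vertices have this property, so automorphisms cannot
exchange points and lines. -/
def HasThreeBridgedPartner (G : SimpleGraph V) (x : V) : Prop :=
  ∃ y, G.commonNeighbors x y = ∅ ∧
    3 ≤ {z | (G.commonNeighbors x z).Nonempty ∧ (G.commonNeighbors y z).Nonempty}.encard

theorem HasThreeBridgedPartner.map (e : G ≃g G') {x : V} (h : G.HasThreeBridgedPartner x) :
    G'.HasThreeBridgedPartner (e x) := by
  obtain ⟨y, hxy, hS⟩ := h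
  refine ⟨e y, by rw [← e.image_commonNeighbors, hxy, Set.image_empty], hS.trans ?_⟩
  rw [← e.injective.encard_image]
  refine Set.encard_le_encard ?_
  rintro _ ⟨z, hz, rfl⟩
  simpa only [Set.mem_ofPred_eq, e.commonNeighbors_nonempty_iff] using hz

theorem Iso.hasThreeBridgedPartner_iff (e : G ≃g G') {x : V} :
    G'.HasThreeBridgedPartner (e x) ↔ G.HasThreeBridgedPartner x :=
  ⟨fun h => by simpa using h.map e.symm, fun h => h.map e⟩

end SimpleGraph

open SimpleGraph Sum

theorem mem_grayLine {w v : GPt} {k : Fin 3} : w ∈ grayLine v k ↔ ∀ j ≠ k, w j = v j := by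
  constructor
  · rintro ⟨t, rfl⟩ j hj
    simp [Pi.single_eq_of_ne hj]
  · intro h
    refine ⟨w k - v k, funext fun j => ?_⟩
    by_cases hj : j = k
    · subst hj; simp
    · simp [Pi.single_eq_of_ne hj, h j hj]

theorem update_mem_grayLine (v : GPt) (k : Fin 3) (t : ZMod 3) : update v k t ∈ grayLine v k :=
  mem_grayLine.mpr fun _ hj => update_of_ne hj ..

theorem self_mem_grayLine (v : GPt) (k : Fin 3) : v ∈ grayLine v k := by
  simpa using update_mem_grayLine v k (v k)

def grayLineThrough (v : GPt) (k : Fin 3) : GrayLine := ⟨grayLine v k, v, k, rfl⟩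

@[simp]
theorem coe_grayLineThrough (v : GPt) (k : Fin 3) :
    (grayLineThrough v k : Set GPt) = grayLine v k :=
  rfl

@[simp]
theorem grayGraph_adj_inl_inr {u : GPt} {ℓ : GrayLine} :
    grayGraph.Adj (inl u) (inr ℓ) ↔ u ∈ ℓ.1 := by
  simp [grayGraph]

@[simp]
theorem grayGraph_adj_inr_inl {u : GPt} {ℓ : GrayLine} :
    grayGraph.Adj (inr ℓ) (inl u) ↔ u ∈ ℓ.1 := by
  simp [grayGraph]

@[simp]
theorem grayGraph_not_adj_inl_inl {u v : GPt} : ¬ grayGraph.Adj (inl u) (inl v) := by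
  simp [grayGraph]

@[simp]
theorem grayGraph_not_adj_inr_inr {ℓ m : GrayLine} : ¬ grayGraph.Adj (inr ℓ) (inr m) := by
  simp [grayGraph]

theorem hammingGraph_adj_iff_exists_grayLine {u v : GPt} :
    (hammingGraph (Fin 3) (ZMod 3)).Adj u v ↔
      u ≠ v ∧ ∃ ℓ : GrayLine, u ∈ ℓ.1 ∧ v ∈ ℓ.1 := by
  rw [hammingGraph.adj_iff]
  refine and_congr_right fun _ =>
    ⟨fun ⟨k, h⟩ => ⟨grayLineThrough v k, mem_grayLine.mpr h, self_mem_grayLine v k⟩, ?_⟩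
  rintro ⟨⟨_, w, k, rfl⟩, hu, hv⟩
  exact ⟨k, fun j hj => (mem_grayLine.mp hu j hj).trans (mem_grayLine.mp hv j hj).symm⟩

theorem exists_grayLine_mem_mem_iff {u v : GPt} :
    (∃ ℓ : GrayLine, u ∈ ℓ.1 ∧ v ∈ ℓ.1) ↔
      u = v ∨ (hammingGraph (Fin 3) (ZMod 3)).Adj u v := by
  rw [hammingGraph_adj_iff_exists_grayLine]
  by_cases huv : u = v
  · subst huv
    exact iff_of_true ⟨grayLineThrough u 0, self_mem_grayLine u 0, self_mem_grayLine u 0⟩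
      (Or.inl rfl)
  · simp [huv]

theorem grayGraph_commonNeighbors_inl_nonempty {u : GPt} {x : GPt ⊕ GrayLine} :
    (grayGraph.commonNeighbors (inl u) x).Nonempty ↔
      ∃ v, x = inl v ∧ (u = v ∨ (hammingGraph (Fin 3) (ZMod 3)).Adj u v) := by
  rcases x with v | m
  · simp only [inl.injEq, exists_eq_left', ← exists_grayLine_mem_mem_iff]
    constructor
    · rintro ⟨_ | ℓ, hu, hv⟩
      · simp at hu
      · exact ⟨ℓ, by simpa using hu, by simpa using hv⟩
    · rintro ⟨ℓ, hu, hv⟩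
      exact ⟨inr ℓ, by simpa using hu, by simpa using hv⟩
  · simp only [reduceCtorEq, false_and, exists_false, iff_false, Set.not_nonempty_iff_eq_empty]
    ext (_ | _) <;> simp [mem_commonNeighbors]

theorem hammingGraph_adj_iff_commonNeighbors_nonempty {u v : GPt} :
    (hammingGraph (Fin 3) (ZMod 3)).Adj u v ↔
      u ≠ v ∧ (grayGraph.commonNeighbors (inl u) (inl v)).Nonempty := by
  simp only [grayGraph_commonNeighbors_inl_nonempty, inl.injEq, exists_eq_left']
  exact ⟨fun h => ⟨h.ne, Or.inr h⟩, fun ⟨hne, h⟩ => h.resolve_left hne⟩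

theorem not_hasThreeBridgedPartner_inl (v : GPt) :
    ¬ grayGraph.HasThreeBridgedPartner (inl v) := by
  rintro ⟨y, hvy, hS⟩
  suffices ∃ z₁ z₂ : GPt, {z | (grayGraph.commonNeighbors (inl v) z).Nonempty ∧
      (grayGraph.commonNeighbors y z).Nonempty} ⊆ {inl z₁, inl z₂} by
    obtain ⟨z₁, z₂, h⟩ := this
    have := hS.trans ((Set.encard_le_encard h).trans (Set.encard_insert_le _ _))
    norm_num at this
  rw [← Set.not_nonempty_iff_eq_empty, grayGraph_commonNeighbors_inl_nonempty] at hvy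
  rcases y with u | m
  · have hvu : v ≠ u ∧ ¬ (hammingGraph (Fin 3) (ZMod 3)).Adj v u := by simpa using hvy
    obtain ⟨z₁, z₂, h⟩ := hammingGraph.exists_commonNeighbors_subset_pair hvu.1 hvu.2
    refine ⟨z₁, z₂, fun z ⟨hvz, huz⟩ => ?_⟩
    obtain ⟨w, rfl, hvw⟩ := grayGraph_commonNeighbors_inl_nonempty.mp hvz
    obtain ⟨_, ⟨⟩, huw⟩ := grayGraph_commonNeighbors_inl_nonempty.mp huz
    have hw : w ∈ (hammingGraph (Fin 3) (ZMod 3)).commonNeighbors v u := by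
      rcases hvw with rfl | hvw <;> rcases huw with rfl | huw
      exacts [(hvu.1 rfl).elim, (hvu.2 huw.symm).elim, (hvu.2 hvw).elim, ⟨hvw, huw⟩]
    rcases h hw with rfl | rfl <;> simp
  · refine ⟨v, v, fun z ⟨hvz, hmz⟩ => ?_⟩
    obtain ⟨w, rfl, -⟩ := grayGraph_commonNeighbors_inl_nonempty.mp hvz
    rw [commonNeighbors_symm] at hmz
    obtain ⟨_, ⟨⟩, -⟩ := grayGraph_commonNeighbors_inl_nonempty.mp hmz

theorem hasThreeBridgedPartner_inr (ℓ : GrayLine) :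
    grayGraph.HasThreeBridgedPartner (inr ℓ) := by
  obtain ⟨_, v, k, rfl⟩ := ℓ
  have hk : k + 1 ≠ k := by simp
  -- the partner is the parallel line through `v + e_{k+1}`; the three transversals in
  -- direction `k + 1` through the points of `ℓ` meet it
  set s := v (k + 1) + 1
  let bridge (t : ZMod 3) : GPt ⊕ GrayLine := inr (grayLineThrough (update v k t) (k + 1))
  have hbridge : Injective bridge := by
    intro t t' h
    have hmem : update v k t ∈ (grayLineThrough (update v k t') (k + 1)).1 := by
      rw [← inr_injective h]
      exact self_mem_grayLine _ _
    simpa using mem_grayLine.mp hmem k hk.symm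
  refine ⟨inr (grayLineThrough (update v (k + 1) s) k), ?_, ?_⟩
  · ext (u | m)
    · simp only [mem_commonNeighbors, grayGraph_adj_inr_inl, coe_grayLineThrough, mem_grayLine,
        Set.mem_empty_iff_false, iff_false, not_and]
      intro h₁ h₂
      simpa [s] using (h₁ _ hk).symm.trans (h₂ _ hk)
    · simp [mem_commonNeighbors]
  · calc (3 : ℕ∞) = ENat.card (ZMod 3) := by simp
      _ ≤ (Set.range bridge).encard := hbridge.encard_range
      _ ≤ _ := Set.encard_le_encard <| Set.range_subset_iff.mpr fun t => show _ ∧ _ from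
        ⟨⟨inl (update v k t), grayGraph_adj_inr_inl.mpr (update_mem_grayLine v k t),
            grayGraph_adj_inr_inl.mpr (self_mem_grayLine _ _)⟩,
          ⟨inl (update (update v k t) (k + 1) s),
            grayGraph_adj_inr_inl.mpr
              (by rw [update_comm hk.symm]; exact update_mem_grayLine _ _ _),
            grayGraph_adj_inr_inl.mpr (update_mem_grayLine _ _ _)⟩⟩

def grayAutIso {σ : Perm (GPt ⊕ GrayLine)} (hσ : σ ∈ grayAut) : grayGraph ≃g grayGraph :=
  ⟨σ, hσ _ _⟩

theorem exists_apply_inl_eq_inl {σ : Perm (GPt ⊕ GrayLine)} (hσ : σ ∈ grayAut) (v : GPt) :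
    ∃ u, σ (inl v) = inl u := by
  rcases h : σ (inl v) with u | m
  · exact ⟨u, rfl⟩
  · have := hasThreeBridgedPartner_inr m
    rw [← h] at this
    exact absurd ((grayAutIso hσ).hasThreeBridgedPartner_iff.mp this)
      (not_hasThreeBridgedPartner_inl v)

theorem grayGraph_neighborSet_inl_ne_inr (u : GPt) (ℓ : GrayLine) :
    grayGraph.neighborSet (inl u) ≠ grayGraph.neighborSet (inr ℓ) := by
  intro h
  have : inr (grayLineThrough u 0) ∈ grayGraph.neighborSet (inl u) := by
    simpa using self_mem_grayLine u 0
  rw [h] at this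
  simp at this

theorem grayGraph_neighborSet_injective : Injective grayGraph.neighborSet := by
  rintro (u | ℓ) (u' | ℓ') h
  · congr 1
    have hmem : ∀ k, u' ∈ grayLine u k := fun k => by
      simpa using (Set.ext_iff.mp h (inr (grayLineThrough u k))).mp
        (by simpa using self_mem_grayLine u k)
    funext j
    exact (mem_grayLine.mp (hmem (j + 1)) j (by simp)).symm
  · exact absurd h (grayGraph_neighborSet_inl_ne_inr u ℓ')
  · exact absurd h.symm (grayGraph_neighborSet_inl_ne_inr u' ℓ)
  · congr 1
    ext u
    simpa using Set.ext_iff.mp h (inl u)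

theorem grayAut_ext {σ τ : Perm (GPt ⊕ GrayLine)} (hσ : σ ∈ grayAut) (hτ : τ ∈ grayAut)
    (h : ∀ v, σ (inl v) = τ (inl v)) : σ = τ := by
  ext (v | ℓ)
  · exact h v
  · refine (grayAutIso hσ).apply_eq_of_eqOn_neighborSet grayGraph_neighborSet_injective
      (grayAutIso hτ) ?_
    rintro (v | m) hv
    · exact h v
    · simp at hv

def grayCollineations : Subgroup (Perm GPt) where
  carrier := {f | ∀ s, IsGrayLine (f '' s) ↔ IsGrayLine s}
  one_mem' s := by simp
  mul_mem' hf hg s := by rw [Perm.coe_mul, Set.image_comp, hf, hg]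
  inv_mem' hf s := by rw [← hf, ← Set.image_comp]; simp

def grayCollineationLinePerm (f : grayCollineations) : Perm GrayLine :=
  (Equiv.Set.congr f.1).subtypeEquiv fun s => (f.2 s).symm

@[simp]
theorem coe_grayCollineationLinePerm (f : grayCollineations) (ℓ : GrayLine) :
    (grayCollineationLinePerm f ℓ : Set GPt) = f.1 '' ℓ.1 :=
  rfl

def grayCollineationToAut : grayCollineations →* grayAut where
  toFun f := ⟨Equiv.sumCongr f.1 (grayCollineationLinePerm f), by
    rintro (u | ℓ) (v | m) <;> simp⟩
  map_one' := by
    ext (u | ℓ)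
    · rfl
    · exact congrArg inr (Subtype.ext (by simp))
  map_mul' f g := by
    ext (u | ℓ)
    · rfl
    · exact congrArg inr (Subtype.ext (by simp [Set.image_comp]))

theorem grayCollineationToAut_injective : Injective grayCollineationToAut := fun _ _ h =>
  Subtype.ext (Equiv.ext fun u => inl_injective (congrArg (fun σ : grayAut => σ.1 (inl u)) h))

theorem wreathPerm_image_grayLine (n : Fin 3 → Perm (ZMod 3)) (π : Perm (Fin 3)) (v : GPt)
    (k : Fin 3) : wreathPerm n π '' grayLine v k = grayLine (wreathPerm n π v) (π k) := by
  ext y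
  obtain ⟨x, rfl⟩ := (wreathPerm n π).surjective y
  rw [(wreathPerm n π).injective.mem_set_image, mem_grayLine, mem_grayLine,
    wreathPerm_agree_iff n π]

def wreathHom :
    SemidirectProduct (Fin 3 → Perm (Fin 3)) (Perm (Fin 3)) permuteFactors →* Perm GPt where
  toFun w := wreathPerm w.left w.right
  map_one' := rfl
  map_mul' _ _ := Equiv.ext fun _ => funext fun _ => rfl

theorem wreathHom_apply
    (w : SemidirectProduct (Fin 3 → Perm (Fin 3)) (Perm (Fin 3)) permuteFactors) :
    wreathHom w = wreathPerm w.left w.right :=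
  rfl

theorem wreathHom_injective : Injective wreathHom := by
  refine (injective_iff_map_eq_one _).mpr fun w hw => ?_
  obtain ⟨hn, hπ⟩ := eq_one_of_wreathPerm_eq_one ((wreathHom_apply w).symm.trans hw)
  exact SemidirectProduct.ext hn hπ

theorem wreathHom_mem_grayCollineations
    (w : SemidirectProduct (Fin 3 → Perm (Fin 3)) (Perm (Fin 3)) permuteFactors) :
    wreathHom w ∈ grayCollineations := by
  have hline : ∀ w s, IsGrayLine s → IsGrayLine (wreathHom w '' s) := by
    rintro w _ ⟨v, k, rfl⟩
    exact ⟨_, _, by rw [wreathHom_apply]; exact wreathPerm_image_grayLine _ _ v k⟩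
  refine fun s => ⟨fun hs => ?_, hline w s⟩
  simpa [← Set.image_comp, ← Perm.coe_mul, ← map_mul] using hline w⁻¹ _ hs

def wreathToGrayAut :
    SemidirectProduct (Fin 3 → Perm (Fin 3)) (Perm (Fin 3)) permuteFactors →* grayAut :=
  grayCollineationToAut.comp (wreathHom.codRestrict _ wreathHom_mem_grayCollineations)

theorem wreathToGrayAut_injective : Injective wreathToGrayAut :=
  grayCollineationToAut_injective.comp fun _ _ h => wreathHom_injective (congrArg Subtype.val h)

theorem wreathToGrayAut_surjective : Surjective wreathToGrayAut := by
  rintro ⟨σ, hσ⟩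
  choose p hp using exists_apply_inl_eq_inl hσ
  have hinj : Injective p := fun u v h => inl_injective (σ.injective (by rw [hp, hp, h]))
  have hadj : ∀ u v, (hammingGraph (Fin 3) (ZMod 3)).Adj (p u) (p v) ↔
      (hammingGraph (Fin 3) (ZMod 3)).Adj u v := fun u v => by
    rw [hammingGraph_adj_iff_commonNeighbors_nonempty,
      hammingGraph_adj_iff_commonNeighbors_nonempty, ← hp u, ← hp v, hinj.ne_iff]
    exact and_congr_right fun _ => (grayAutIso hσ).commonNeighbors_nonempty_iff
  obtain ⟨n, π, rfl⟩ := hammingGraph.exists_eq_wreathPerm hinj hadj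
  exact ⟨⟨n, π⟩, Subtype.ext (grayAut_ext (wreathToGrayAut _).2 hσ fun v => (hp v).symm)⟩

theorem aut_grayGraph_iso_wreath :
    Nonempty (grayAut ≃*
      SemidirectProduct (Fin 3 → Equiv.Perm (Fin 3)) (Equiv.Perm (Fin 3)) permuteFactors) :=
  ⟨(MulEquiv.ofBijective wreathToGrayAut
    ⟨wreathToGrayAut_injective, wreathToGrayAut_surjective⟩).symm⟩
end
end

section
/- The circumcenter of the three points D₋₁, D₋₃ and the origin O is the point (0, 1/(2·cos(2π/9))); consequently, a point (x,y) ∈ ℝ² lies on the circle 𝒞 if and only if x² + y² − y/cos(2π/9) = 0. -/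
/-!
With `θ = 2π/9`, the points are `D₋₁ = (-sin θ, cos θ)` and `D₋₃ = (sin θ, cos θ)`, mirror images
in the `y`-axis. A point equidistant from them lies on the `y`-axis, and a point `(0, r)` is
equidistant from `(sin θ, cos θ)` and `O` iff `2 r cos θ = sin² θ + cos² θ = 1`.
The circle about `(0, r)` through `O` is `x² + y² - 2 r y = 0`.
-/

open Real

noncomputable section

/-- The claimed circumcenter. -/
def ctr : Pt := pt 0 (1 / (2 * Real.cos (2 * π / 9)))

lemma dist_pt_eq_dist_pt_iff (a b c d a' b' c' d' : ℝ) :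
    dist (pt a b) (pt c d) = dist (pt a' b') (pt c' d') ↔
      (a - c) ^ 2 + (b - d) ^ 2 = (a' - c') ^ 2 + (b' - d') ^ 2 := by
  simp only [EuclideanSpace.dist_eq, pt, Fin.sum_univ_two, Real.dist_eq, sq_abs]
  exact Real.sqrt_inj (by positivity) (by positivity)

lemma eq_pt (p : Pt) : p = pt (p 0) (p 1) := by
  ext i; fin_cases i <;> simp [pt]

lemma equidistant_mirror_pair_origin_iff {s c : ℝ} (hs : s ≠ 0) (hc : c ≠ 0)
    (hsc : s ^ 2 + c ^ 2 = 1) (p : Pt) :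
    dist p (pt (-s) c) = dist p O ∧ dist p (pt s c) = dist p O ↔ p = pt 0 (1 / (2 * c)) := by
  rw [eq_pt p, O]
  simp only [dist_pt_eq_dist_pt_iff]
  set a := p 0
  set b := p 1
  constructor
  · rintro ⟨h₁, h₂⟩
    have ha : a = 0 := by
      have : 4 * s * a = 0 := by linear_combination h₁ - h₂
      simpa [hs] using this
    have hb : b = 1 / (2 * c) := by
      field_simp
      linear_combination hsc - h₂ - 2 * s * ha
    rw [ha, hb]
  · intro h
    obtain ⟨ha, hb⟩ : a = 0 ∧ b = 1 / (2 * c) := by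
      simpa [pt] using congrArg (fun q : Pt => (q 0, q 1)) h
    have hbc : 2 * c * b = 1 := by rw [hb]; field_simp
    constructor
    · linear_combination 2 * s * ha + hsc - hbc
    · linear_combination -2 * s * ha + hsc - hbc

lemma dist_eq_dist_origin_iff (x y r : ℝ) :
    dist (pt x y) (pt 0 r) = dist O (pt 0 r) ↔ x ^ 2 + y ^ 2 - 2 * r * y = 0 := by
  rw [O, dist_pt_eq_dist_pt_iff]
  constructor <;> intro h <;> linear_combination h

lemma D_neg_one : D (-1) = pt (-sin (2 * π / 9)) (cos (2 * π / 9)) := by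
  have : 2 * π * ((-1 : ℤ) : ℝ) / 9 + 17 * π / 18 = 2 * π / 9 + π / 2 := by push_cast; ring
  rw [D, this, cos_add_pi_div_two, sin_add_pi_div_two]

lemma D_neg_three : D (-3) = pt (sin (2 * π / 9)) (cos (2 * π / 9)) := by
  have : 2 * π * ((-3 : ℤ) : ℝ) / 9 + 17 * π / 18 = π / 2 - 2 * π / 9 := by push_cast; ring
  rw [D, this, cos_pi_div_two_sub, sin_pi_div_two_sub]

lemma sin_two_pi_div_nine_pos : 0 < sin (2 * π / 9) :=
  sin_pos_of_pos_of_lt_pi (by positivity) (by linarith [pi_pos])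

lemma cos_two_pi_div_nine_pos : 0 < cos (2 * π / 9) :=
  cos_pos_of_mem_Ioo ⟨by linarith [pi_pos], by linarith [pi_pos]⟩

theorem circumcenter_and_circle_equation :
    -- ctr is equidistant from D₋₁, D₋₃ and O, hence is the circumcenter ...
    (dist ctr (D (-1)) = dist ctr O ∧ dist ctr (D (-3)) = dist ctr O) ∧
    -- ... and it is the unique such point:
    (∀ c : Pt, dist c (D (-1)) = dist c O → dist c (D (-3)) = dist c O → c = ctr) ∧
    -- consequently, (x,y) lies on the circle 𝒞 through D₋₁, D₋₃, O iff
    -- x² + y² − y/cos(2π/9) = 0: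
    (∀ x y : ℝ, dist (pt x y) ctr = dist O ctr ↔
      x ^ 2 + y ^ 2 - y / Real.cos (2 * π / 9) = 0) := by
  have hc := cos_two_pi_div_nine_pos
  have hcircum := equidistant_mirror_pair_origin_iff sin_two_pi_div_nine_pos.ne' hc.ne'
    (sin_sq_add_cos_sq (2 * π / 9))
  rw [D_neg_one, D_neg_three]
  refine ⟨(hcircum ctr).mpr rfl, fun p h₁ h₃ => (hcircum p).mp ⟨h₁, h₃⟩, fun x y => ?_⟩
  rw [ctr, dist_eq_dist_origin_iff, show 2 * (1 / (2 * cos (2 * π / 9))) * y = y / cos (2 * π / 9) by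
    field_simp]
end
end
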